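/- arXiv:2311.17047 — 7 statements merged into one kernel-verified Lean document; each statement's English description precedes it below -/
import Mathlib

section
/- A positive semidefinite n×n matrix X is (n−1)-incoherent if and only if there exist positive semidefinite matrices F_0,...,F_{n−1} with X = Σ_{i=0}^{n−1} F_i and ⟨i|F_i|i⟩ = 0 for every i. -/
/-!
A vector with at most `n - 1` nonzero entries vanishes at some coordinate `i`, so its rank-one
projector has zero `(i, i)` entry; grouping the terms of an incoherent decomposition by such an
`i` gives the `F i`. Conversely, each `F i` is a sum of rank-one projectors `ψ ψ*`, and
`F i i i = ∑ |ψ i|² = 0` forces every `ψ` in it to vanish at `i`.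
-/

open Matrix BigOperators Finset ComplexOrder

/-- Circulant matrix: entries depend only on `(j - i) mod n`. -/
def IsCirc {n : ℕ} (G : Matrix (Fin n) (Fin n) ℂ) : Prop :=
  ∃ g : Fin n → ℂ, ∀ i j, G i j = g (j - i)

/-- The cyclic shift permutation matrix `P` with `P i j = 1` iff `j = i + 1 (mod n)`. -/
def cyclicShift (n : ℕ) [NeZero n] : Matrix (Fin n) (Fin n) ℂ :=
  Matrix.of fun i j => if j = i + 1 then 1 else 0

/-- `k`-incoherent PSD matrix. -/
def KIncoherent {n : ℕ} (k : ℕ) (X : Matrix (Fin n) (Fin n) ℂ) : Prop :=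
  ∃ (m : ℕ) (c : Fin m → ℝ) (ψ : Fin m → (Fin n → ℂ)),
    (∀ j, 0 ≤ c j) ∧
    (∀ j, (Finset.univ.filter fun i => ψ j i ≠ 0).card ≤ k) ∧
    X = ∑ j, (c j : ℂ) • Matrix.vecMulVec (ψ j) (star (ψ j))

/-- `(n-1)`-locally PSD: every principal submatrix obtained by deleting one row and the
corresponding column is positive semidefinite. -/
def LocallyPSD {n : ℕ} (Y : Matrix (Fin n) (Fin n) ℂ) : Prop :=
  ∀ i : Fin n,
    Matrix.PosSemidef (Y.submatrix (fun k : {j : Fin n // j ≠ i} => (k : Fin n))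
      (fun k : {j : Fin n // j ≠ i} => (k : Fin n)))

/-- The (unitary) discrete Fourier transform matrix. -/
noncomputable def dftMatrix (n : ℕ) : Matrix (Fin n) (Fin n) ℂ :=
  Matrix.of fun j k =>
    Complex.exp (2 * Real.pi * Complex.I * (j.val * k.val) / n) / Real.sqrt n

section

variable {ι : Type*}

theorem card_filter_ne_zero_lt_card_iff [Fintype ι] {M : Type*} [Zero M] (v : ι → M)
    [DecidablePred fun i => v i ≠ 0] :
    #{i | v i ≠ 0} < Fintype.card ι ↔ ∃ i, v i = 0 := by
  rw [← card_univ, (card_filter_le _ _).lt_iff_ne, Ne, card_filter_eq_iff]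
  simp

variable {𝕜 : Type*} [RCLike 𝕜]

theorem sum_vecMulVec_self_star_apply_self_eq_zero_iff {J : Type*} [Fintype J]
    (v : J → ι → 𝕜) (i : ι) :
    (∑ j, vecMulVec (v j) (star (v j))) i i = 0 ↔ ∀ j, v j i = 0 := by
  simp only [Matrix.sum_apply, vecMulVec_apply, Pi.star_apply]
  rw [sum_eq_zero_iff_of_nonneg fun j _ => mul_star_self_nonneg (v j i)]
  simp

theorem exists_posSemidef_sum_of_apply_self_eq_zero [Fintype ι] [DecidableEq ι] {J : Type*}
    [Fintype J] (T : J → Matrix ι ι 𝕜) (hT : ∀ j, (T j).PosSemidef) (p : J → ι)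
    (hp : ∀ j, T j (p j) (p j) = 0) :
    ∃ F : ι → Matrix ι ι 𝕜, (∀ i, (F i).PosSemidef) ∧ ∑ j, T j = ∑ i, F i ∧ ∀ i, F i i i = 0 := by
  refine ⟨fun i => ∑ j with p j = i, T j, fun i => posSemidef_sum _ fun j _ => hT j,
    (sum_fiberwise _ _ _).symm, fun i => ?_⟩
  change (∑ j with p j = i, T j) i i = 0
  rw [Matrix.sum_apply]
  refine sum_eq_zero fun j hj => ?_
  rw [← (mem_filter.mp hj).2, hp j]

end

theorem kIncoherent_of_eq_sum_vecMulVec {n k : ℕ} {J : Type*} [Fintype J]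
    {X : Matrix (Fin n) (Fin n) ℂ} (ψ : J → Fin n → ℂ)
    (hψ : ∀ j, #{i | ψ j i ≠ 0} ≤ k) (hX : X = ∑ j, vecMulVec (ψ j) (star (ψ j))) :
    KIncoherent k X := by
  classical
  let e := Fintype.equivFin J
  refine ⟨Fintype.card J, 1, ψ ∘ e.symm, fun _ => zero_le_one, fun j => hψ _, ?_⟩
  rw [hX, ← e.symm.sum_comp]
  simp

theorem stmt4_general {n : ℕ} (X : Matrix (Fin n) (Fin n) ℂ) :
    KIncoherent (n - 1) X ↔
      ∃ F : Fin n → Matrix (Fin n) (Fin n) ℂ,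
        (∀ i, (F i).PosSemidef) ∧ X = ∑ i, F i ∧ ∀ i, F i i i = 0 := by
  classical
  constructor
  · rintro ⟨m, c, ψ, hc, hψ, rfl⟩
    rcases n.eq_zero_or_pos with rfl | hn
    · exact ⟨0, fun _ => .zero, Subsingleton.elim _ _, fun i => i.elim0⟩
    have hzero j : ∃ i, ψ j i = 0 := by
      rw [← card_filter_ne_zero_lt_card_iff, Fintype.card_fin]
      exact (hψ j).trans_lt (Nat.sub_lt hn one_pos)
    choose p hp using hzero
    refine exists_posSemidef_sum_of_apply_self_eq_zero _
      (fun j => (posSemidef_vecMulVec_self_star _).smul (by exact_mod_cast hc j)) p fun j => ?_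
    simp [vecMulVec_apply, hp j]
  · rintro ⟨F, hF, rfl, hFi⟩
    choose m ψ hψ using fun i => posSemidef_iff_eq_sum_vecMulVec.mp (hF i)
    have hzero (i : Fin n) (j : Fin (m i)) : ψ i j i = 0 :=
      (sum_vecMulVec_self_star_apply_self_eq_zero_iff _ i).mp (hψ i ▸ hFi i) j
    refine kIncoherent_of_eq_sum_vecMulVec (fun q : Σ i, Fin (m i) => ψ q.1 q.2)
      (fun ⟨i, j⟩ => ?_) ?_
    · have hlt := (card_filter_ne_zero_lt_card_iff (ψ i j)).mpr ⟨i, hzero i j⟩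
      rw [Fintype.card_fin] at hlt
      exact Nat.le_sub_one_of_lt hlt
    · rw [Fintype.sum_sigma]
      exact sum_congr rfl fun i _ => hψ i

theorem stmt4 {n : ℕ} (X : Matrix (Fin n) (Fin n) ℂ) (hX : X.PosSemidef) :
    KIncoherent (n - 1) X ↔
      ∃ F : Fin n → Matrix (Fin n) (Fin n) ℂ,
        (∀ i, (F i).PosSemidef) ∧ X = ∑ i, F i ∧ ∀ i, F i i i = 0 :=
  stmt4_general X
end

section
/- For n = 3, the matrix Y with diagonal entries 1 and off-diagonal entries −1 is (n−1)-locally PSD (every 2×2 principal submatrix of Y is positive semidefinite) while Tr(JY) = −3 < 0, so the 3×3 all-ones matrix J is not 2-incoherent. -/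
open Matrix BigOperators Finset ComplexOrder

lemma key_fact5 : ∀ i a b : Fin 3, a ≠ i → b ≠ i → (a = b ↔ ((a = i+1) ↔ (b = i+1))) := by decide

lemma Ypsd5 : LocallyPSD (Matrix.of fun i j : Fin 3 => if i = j then (1:ℂ) else -1) := by
  intro i
  have : (Matrix.of fun i j : Fin 3 => if i = j then (1:ℂ) else -1).submatrix
      (fun k : {j : Fin 3 // j ≠ i} => (k : Fin 3)) (fun k : {j : Fin 3 // j ≠ i} => (k : Fin 3))
      = (Matrix.of fun (_ : Fin 1) (k : {j : Fin 3 // j ≠ i}) =>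
          if (k : Fin 3) = i+1 then (-1:ℂ) else 1)ᴴ *
        (Matrix.of fun (_ : Fin 1) (k : {j : Fin 3 // j ≠ i}) =>
          if (k : Fin 3) = i+1 then (-1:ℂ) else 1) := by
    ext ⟨a, ha⟩ ⟨b, hb⟩
    simp only [Matrix.submatrix_apply, Matrix.mul_apply, Matrix.conjTranspose_apply,
      Matrix.of_apply, Fin.sum_univ_one]
    have h := key_fact5 i a b ha hb
    by_cases h1 : a = i+1 <;> by_cases h2 : b = i+1
    · rw [if_pos (h.mpr (by simp [h1, h2])), if_pos h1, if_pos h2]; simp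
    · rw [if_neg (fun hab => h2 ((h.mp hab).mp h1)), if_pos h1, if_neg h2]; simp
    · rw [if_neg (fun hab => h1 ((h.mp hab).mpr h2)), if_neg h1, if_pos h2]; simp
    · rw [if_pos (h.mpr (by simp [h1, h2])), if_neg h1, if_neg h2]; simp
  rw [this]
  exact Matrix.posSemidef_conjTranspose_mul_self _

lemma quad_nonneg5 (Y : Matrix (Fin 3) (Fin 3) ℂ) (hY : LocallyPSD Y)
    (ψ : Fin 3 → ℂ) (i₀ : Fin 3) (h0 : ψ i₀ = 0) :
    0 ≤ (Matrix.vecMulVec ψ (star ψ) * Y).trace := by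
  have H := (hY i₀).dotProduct_mulVec_nonneg (fun k => ψ k)
  set g : Fin 3 → Fin 3 → ℂ := fun k l => (starRingEnd ℂ) (ψ k) * (Y k l * ψ l) with hg
  have hdot : star (fun k : {j : Fin 3 // j ≠ i₀} => ψ k) ⬝ᵥ
      ((Y.submatrix (fun k : {j : Fin 3 // j ≠ i₀} => (k : Fin 3))
        (fun k : {j : Fin 3 // j ≠ i₀} => (k : Fin 3))) *ᵥ fun k => ψ k)
      = ∑ k : {j : Fin 3 // j ≠ i₀}, ∑ l : {j : Fin 3 // j ≠ i₀}, g k l := by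
    simp [dotProduct, Matrix.mulVec, dotProduct, Finset.mul_sum, hg]
  have hsub : ∑ k : {j : Fin 3 // j ≠ i₀}, ∑ l : {j : Fin 3 // j ≠ i₀}, g k l
      = ∑ k : Fin 3, ∑ l : Fin 3, g k l := by
    have hzero : ∀ k l, (k = i₀ ∨ l = i₀) → g k l = 0 := by
      rintro k l (rfl | rfl) <;> simp [hg, h0]
    rw [← Finset.sum_subtype (Finset.univ.filter (· ≠ i₀)) (by simp)
      (fun k => ∑ l : {j : Fin 3 // j ≠ i₀}, g k l)]
    rw [Finset.sum_filter_of_ne (fun k _ hk => by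
      intro hki; apply hk; apply Finset.sum_eq_zero; intro l _; exact hzero k l (Or.inl hki))]
    apply Finset.sum_congr rfl
    intro k _
    rw [← Finset.sum_subtype (Finset.univ.filter (· ≠ i₀)) (by simp) (fun l => g k l)]
    exact Finset.sum_filter_of_ne (fun l _ hl hli => hl (hzero k l (Or.inr hli)))
  have htr : (Matrix.vecMulVec ψ (star ψ) * Y).trace = ∑ k : Fin 3, ∑ l : Fin 3, g k l := by
    simp only [Matrix.trace, Matrix.diag, Matrix.mul_apply, Matrix.vecMulVec_apply, Pi.star_apply]
    rw [Finset.sum_comm]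
    apply Finset.sum_congr rfl; intro k _
    apply Finset.sum_congr rfl; intro l _
    simp [hg, RCLike.star_def]
    ring
  rw [htr, ← hsub, ← hdot]
  exact H

theorem stmt5 :
    let J : Matrix (Fin 3) (Fin 3) ℂ := Matrix.of fun _ _ => 1
    let Y : Matrix (Fin 3) (Fin 3) ℂ := Matrix.of fun i j => if i = j then 1 else -1
    LocallyPSD Y ∧ (J * Y).trace = -3 ∧ ¬ KIncoherent 2 J := by
  intro J Y
  have htrace : (J * Y).trace = -3 := by
    simp [J, Y, Matrix.trace, Matrix.mul_apply, Fin.sum_univ_three, Matrix.diag, Fin.ext_iff]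
    norm_num
  refine ⟨Ypsd5, htrace, ?_⟩
  rintro ⟨m, c, ψ, hc, hcard, hX⟩
  have hnn : 0 ≤ (J * Y).trace := by
    rw [hX, Finset.sum_mul, Matrix.trace_sum]
    apply Finset.sum_nonneg
    intro j _
    rw [Matrix.smul_mul, Matrix.trace_smul]
    have hzero : ∃ i₀, ψ j i₀ = 0 := by
      by_contra hc'
      push_neg at hc'
      have heq : (Finset.univ.filter fun i => ψ j i ≠ 0) = Finset.univ := by
        apply Finset.filter_true_of_mem; intro i _; exact hc' i
      have h := hcard j
      rw [heq] at h
      simp at h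
    obtain ⟨i₀, hi₀⟩ := hzero
    have h1 : (0:ℂ) ≤ (c j : ℂ) := by
      rw [Complex.zero_le_real]; exact hc j
    have h2 := quad_nonneg5 Y Ypsd5 (ψ j) i₀ hi₀
    exact smul_nonneg h1 h2
  rw [htrace] at hnn
  simp [Complex.le_def] at hnn
  norm_num at hnn
end

section
/- Let W be a d×n complex matrix, G = W*W, and W† the Moore–Penrose pseudoinverse of W. If F_0,...,F_{n−1} are positive semidefinite n×n matrices with Σ_i F_i = G, then the matrices M_i := (W†)* F_i W† + (1/n)(I − W W†) are positive semidefinite d×d matrices satisfying Σ_i M_i = I_d, and ⟨ψ_i|M_i|ψ_i⟩ = ⟨i|F_i|i⟩ where ψ_i is the i-th column of W. -/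
/-!
The Penrose equations make `P := W W†` the orthogonal projection onto the range of `W`, so
`1 - P` is positive semidefinite and the `M_i` are. Conjugating `∑ F_i = W* W` by `W†` gives
`(W†)* W* W W† = P* P = P`, whence `∑ M_i = P + (1 - P) = 1`. Finally, each `F_i` is dominated
by `W* W`, so it vanishes on the kernel of `W`, i.e. `F_i (1 - W† W) = 0`; hence
`W* M_i W = (W† W) F_i (W† W) = F_i`, whose `i`-th diagonal entry is `⟨ψ_i|M_i|ψ_i⟩`.
-/

open Matrix BigOperators Finset ComplexOrder

namespace Matrix

variable {𝕜 m n ι : Type*} [RCLike 𝕜] [Fintype m]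

theorem conjTranspose_mul_mul_apply_self (A : Matrix m m 𝕜) (W : Matrix m n 𝕜) (i : n) :
    (Wᴴ * A * W) i i = star (fun k => W k i) ⬝ᵥ A *ᵥ fun k => W k i := by
  simp only [mul_apply, dotProduct, mulVec, sum_mul, mul_sum, conjTranspose_apply,
    Pi.star_apply]
  rw [sum_comm]
  exact sum_congr rfl fun k _ => sum_congr rfl fun l _ => by ring

variable [Fintype n] [Fintype ι]

theorem posSemidef_one_sub_of_isHermitian_of_mul_self [DecidableEq m] {P : Matrix m m 𝕜}
    (hP : P.IsHermitian) (hPP : P * P = P) : (1 - P).PosSemidef := by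
  have h : (1 - P)ᴴ * (1 - P) = 1 - P := by
    rw [conjTranspose_sub, conjTranspose_one, hP.eq, Matrix.sub_mul, Matrix.mul_sub,
      Matrix.mul_sub, hPP]
    simp
  exact h ▸ posSemidef_conjTranspose_mul_self _

section SumEqConjTransposeMulSelf

variable {F : ι → Matrix n n 𝕜} {W : Matrix m n 𝕜}

theorem PosSemidef.mulVec_eq_zero_of_sum_eq_conjTranspose_mul_self
    (hF : ∀ j, (F j).PosSemidef) (hsum : ∑ j, F j = Wᴴ * W) {y : n → 𝕜} (hy : W *ᵥ y = 0)
    (i : ι) : F i *ᵥ y = 0 := by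
  have hzero : ∑ j, star y ⬝ᵥ F j *ᵥ y = 0 := by
    rw [← dotProduct_sum, ← sum_mulVec, hsum, ← mulVec_mulVec, dotProduct_mulVec,
      ← star_mulVec, hy]
    simp
  have hi := (sum_eq_zero_iff_of_nonneg fun j _ => (hF j).dotProduct_mulVec_nonneg y).mp
    hzero i (mem_univ i)
  exact ((hF i).dotProduct_mulVec_zero_iff y).mp hi

theorem PosSemidef.mul_eq_zero_of_sum_eq_conjTranspose_mul_self {l : Type*} [Fintype l]
    (hF : ∀ j, (F j).PosSemidef) (hsum : ∑ j, F j = Wᴴ * W) {B : Matrix n l 𝕜}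
    (hB : W * B = 0) (i : ι) : F i * B = 0 := by
  refine ext_iff_mulVec.mpr fun v => ?_
  rw [← mulVec_mulVec, zero_mulVec]
  refine PosSemidef.mulVec_eq_zero_of_sum_eq_conjTranspose_mul_self hF hsum ?_ i
  rw [mulVec_mulVec, hB, zero_mulVec]

theorem PosSemidef.mul_mul_eq_self_of_sum_eq_conjTranspose_mul_self {Wp : Matrix n m 𝕜}
    (h1 : W * Wp * W = W) (h4 : (Wp * W)ᴴ = Wp * W)
    (hF : ∀ j, (F j).PosSemidef) (hsum : ∑ j, F j = Wᴴ * W) (i : ι) :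
    Wp * W * F i * (Wp * W) = F i := by
  classical
  have hright : F i * (Wp * W) = F i := by
    have h := PosSemidef.mul_eq_zero_of_sum_eq_conjTranspose_mul_self hF hsum
      (B := 1 - Wp * W) (by rw [Matrix.mul_sub, Matrix.mul_one, ← Matrix.mul_assoc, h1,
        sub_self]) i
    rw [Matrix.mul_sub, Matrix.mul_one, sub_eq_zero] at h
    exact h.symm
  have hleft : Wp * W * F i = F i := by
    simpa only [conjTranspose_mul, h4, (hF i).isHermitian.eq] using congrArg (·ᴴ) hright
  rw [hleft, hright]

end SumEqConjTransposeMulSelf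

end Matrix

theorem stmt9_general {d n : ℕ} [NeZero n] (W : Matrix (Fin d) (Fin n) ℂ)
    (Wp : Matrix (Fin n) (Fin d) ℂ)
    (h1 : W * Wp * W = W)
    (h3 : (W * Wp)ᴴ = W * Wp) (h4 : (Wp * W)ᴴ = Wp * W)
    (F : Fin n → Matrix (Fin n) (Fin n) ℂ) (hF : ∀ i, (F i).PosSemidef)
    (hsum : ∑ i, F i = Wᴴ * W) :
    (∀ i, (Wpᴴ * F i * Wp + (n : ℂ)⁻¹ • (1 - W * Wp)).PosSemidef) ∧
    (∑ i, (Wpᴴ * F i * Wp + (n : ℂ)⁻¹ • (1 - W * Wp)) = 1) ∧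
    (∀ i, dotProduct (star fun k => W k i)
        ((Wpᴴ * F i * Wp + (n : ℂ)⁻¹ • (1 - W * Wp)) *ᵥ fun k => W k i) = F i i i) := by
  have hproj : W * Wp * (W * Wp) = W * Wp := by rw [← Matrix.mul_assoc, h1]
  refine ⟨fun i => ((hF i).conjTranspose_mul_mul_same Wp).add
    ((posSemidef_one_sub_of_isHermitian_of_mul_self h3 hproj).smul (by positivity)), ?_, fun i => ?_⟩
  · have hconj : Wpᴴ * (Wᴴ * W) * Wp = W * Wp := by
      rw [← Matrix.mul_assoc, ← conjTranspose_mul, Matrix.mul_assoc, h3, hproj]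
    rw [sum_add_distrib, ← Matrix.sum_mul, ← Matrix.mul_sum, hsum, hconj, sum_const, card_univ,
      Fintype.card_fin, ← Nat.cast_smul_eq_nsmul ℂ, smul_smul,
      mul_inv_cancel₀ (NeZero.ne (n : ℂ)), one_smul, add_sub_cancel]
  · have hker : (1 - W * Wp) * W = 0 := by rw [Matrix.sub_mul, Matrix.one_mul, h1, sub_self]
    rw [← conjTranspose_mul_mul_apply_self, Matrix.mul_add, Matrix.add_mul, Matrix.mul_smul,
      Matrix.smul_mul, Matrix.mul_assoc Wᴴ (1 - W * Wp), hker, Matrix.mul_zero, smul_zero,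
      add_zero, ← Matrix.mul_assoc, ← Matrix.mul_assoc, ← conjTranspose_mul, h4,
      Matrix.mul_assoc _ Wp W,
      PosSemidef.mul_mul_eq_self_of_sum_eq_conjTranspose_mul_self h1 h4 hF hsum]

theorem stmt9 {d n : ℕ} [NeZero n] (W : Matrix (Fin d) (Fin n) ℂ)
    (Wp : Matrix (Fin n) (Fin d) ℂ)
    (h1 : W * Wp * W = W) (h2 : Wp * W * Wp = Wp)
    (h3 : (W * Wp)ᴴ = W * Wp) (h4 : (Wp * W)ᴴ = Wp * W)
    (F : Fin n → Matrix (Fin n) (Fin n) ℂ) (hF : ∀ i, (F i).PosSemidef)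
    (hsum : ∑ i, F i = Wᴴ * W) :
    (∀ i, (Wpᴴ * F i * Wp + (n : ℂ)⁻¹ • (1 - W * Wp)).PosSemidef) ∧
    (∑ i, (Wpᴴ * F i * Wp + (n : ℂ)⁻¹ • (1 - W * Wp)) = 1) ∧
    (∀ i, dotProduct (star fun k => W k i)
        ((Wpᴴ * F i * Wp + (n : ℂ)⁻¹ • (1 - W * Wp)) *ᵥ fun k => W k i) = F i i i) :=
  stmt9_general W Wp h1 h3 h4 F hF hsum
end

section
/- Let n ≥ 2, 0 ≤ γ ≤ 1, and G = I + γ(J − I) where J is the n×n all-ones matrix. If γ ≤ (n−2)/(n−1), then G is (n−1)-incoherent: explicitly, G = Σ_{i=0}^{n−1} F_i where F_i = (1/(n−1) − γ/(n−2))(I − |i⟩⟨i|) + (γ/(n−2))(𝟙 − e_i)(𝟙 − e_i)^T, each F_i is PSD and has its i-th row and column equal to zero. -/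
/-!
With `vᵢ = 𝟙 - eᵢ`, each `Fᵢ = c (I - eᵢeᵢᵀ) + d vᵢvᵢᵀ` is a nonnegative combination of rank-one
matrices `ψψ*` whose vectors vanish at `i`, so it is PSD and `(n-1)`-incoherent as soon as
`c, d ≥ 0`; the bound `γ ≤ (n-2)/(n-1)` is exactly `c ≥ 0`. Summing,
`∑ᵢ (I - eᵢeᵢᵀ) = (n-1) I` and `∑ᵢ vᵢvᵢᵀ = I + (n-2) J`, and the choice of `c` and `d` makes the
coefficients of `I` and `J` equal to `1 - γ` and `γ`.
-/

open Matrix BigOperators Finset ComplexOrder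

namespace KIncoherent

variable {n k : ℕ}

theorem zero : KIncoherent k (0 : Matrix (Fin n) (Fin n) ℂ) :=
  ⟨0, Fin.elim0, Fin.elim0, (·.elim0), (·.elim0), by simp⟩

theorem add {X Y : Matrix (Fin n) (Fin n) ℂ} (hX : KIncoherent k X) (hY : KIncoherent k Y) :
    KIncoherent k (X + Y) := by
  obtain ⟨m, c, ψ, hc, hψ, rfl⟩ := hX
  obtain ⟨m', c', ψ', hc', hψ', rfl⟩ := hY
  refine ⟨m + m', Fin.append c c', Fin.append ψ ψ', fun j => ?_, fun j => ?_, ?_⟩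
  · cases j using Fin.addCases <;> simp [hc, hc']
  · cases j using Fin.addCases <;> simp [hψ, hψ']
  · simp [Fin.sum_univ_add]

theorem smul {X : Matrix (Fin n) (Fin n) ℂ} (hX : KIncoherent k X) {a : ℝ} (ha : 0 ≤ a) :
    KIncoherent k ((a : ℂ) • X) := by
  obtain ⟨m, c, ψ, hc, hψ, rfl⟩ := hX
  refine ⟨m, a • c, ψ, fun j => mul_nonneg ha (hc j), hψ, ?_⟩
  simp only [Finset.smul_sum, smul_smul, Pi.smul_apply, smul_eq_mul, Complex.ofReal_mul]

theorem sum {ι : Type*} {s : Finset ι} {X : ι → Matrix (Fin n) (Fin n) ℂ}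
    (hX : ∀ i ∈ s, KIncoherent k (X i)) : KIncoherent k (∑ i ∈ s, X i) :=
  Finset.sum_induction X (KIncoherent k) (fun _ _ => add) zero hX

theorem posSemidef {X : Matrix (Fin n) (Fin n) ℂ} (hX : KIncoherent k X) : X.PosSemidef := by
  obtain ⟨m, c, ψ, hc, -, rfl⟩ := hX
  exact posSemidef_sum _ fun j _ =>
    (posSemidef_vecMulVec_self_star (ψ j)).smul (by exact_mod_cast hc j)

end KIncoherent

theorem kIncoherent_vecMulVec_self_star {n k : ℕ} {ψ : Fin n → ℂ}
    (hψ : (Finset.univ.filter fun i => ψ i ≠ 0).card ≤ k) :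
    KIncoherent k (vecMulVec ψ (star ψ)) :=
  ⟨1, 1, fun _ => ψ, fun _ => zero_le_one, fun _ => hψ, by simp⟩

theorem kIncoherent_diagonal {n k : ℕ} (hk : 1 ≤ k) {d : Fin n → ℝ} (hd : 0 ≤ d) :
    KIncoherent k (diagonal fun i => (d i : ℂ)) := by
  have hdiag : (diagonal fun i => (d i : ℂ)) =
      ∑ i, (d i : ℂ) • vecMulVec (Pi.single i 1) (star (Pi.single i 1)) := by
    ext a b
    rcases eq_or_ne a b with rfl | hab
    · simp [Matrix.sum_apply, vecMulVec_apply, Pi.single_apply]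
    · simp [Matrix.sum_apply, vecMulVec_apply, Pi.single_apply, hab]
  rw [hdiag]
  refine KIncoherent.sum fun i _ => (kIncoherent_vecMulVec_self_star ?_).smul (hd i)
  simpa [Pi.single_apply, Finset.filter_eq'] using hk

section IncoherentTerm

variable {ι : Type*} [DecidableEq ι]

/-- The paper's `Fᵢ`, with `c = 1/(n-1) - γ/(n-2)` and `d = γ/(n-2)` kept as parameters. -/
def incoherentTerm (c d : ℝ) (i : ι) : Matrix ι ι ℂ :=
  (c : ℂ) • (1 - single i i 1) +
    (d : ℂ) • vecMulVec ((fun _ => (1 : ℂ)) - Pi.single i 1) ((fun _ => (1 : ℂ)) - Pi.single i 1)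

theorem incoherentTerm_apply_self_left (c d : ℝ) (i j : ι) : incoherentTerm c d i i j = 0 := by
  rcases eq_or_ne i j with rfl | hij <;> simp [incoherentTerm, vecMulVec_apply, one_apply, *]

theorem incoherentTerm_apply_self_right (c d : ℝ) (i j : ι) : incoherentTerm c d i j i = 0 := by
  rcases eq_or_ne i j with rfl | hij
  · simp [incoherentTerm, vecMulVec_apply]
  · simp [incoherentTerm, vecMulVec_apply, one_apply, hij, hij.symm]

theorem sum_incoherentTerm [Fintype ι] (c d : ℝ) :
    ∑ i : ι, incoherentTerm c d i =
      ((c * (Fintype.card ι - 1) + d : ℝ) : ℂ) • 1 +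
        ((d * (Fintype.card ι - 2) : ℝ) : ℂ) • of fun _ _ => 1 := by
  ext a b
  rcases eq_or_ne a b with rfl | hab
  all_goals
    simp [incoherentTerm, Matrix.sum_apply, vecMulVec_apply, one_apply, single_apply,
      Pi.single_apply, mul_sub, Finset.sum_add_distrib, Finset.sum_sub_distrib, ite_and, *]
    ring

end IncoherentTerm

theorem kIncoherent_incoherentTerm {n : ℕ} (hn : 2 ≤ n) {c d : ℝ} (hc : 0 ≤ c) (hd : 0 ≤ d)
    (i : Fin n) : KIncoherent (n - 1) (incoherentTerm c d i) := by
  set v : Fin n → ℂ := (fun _ => 1) - Pi.single i 1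
  have hdiag : (1 - single i i 1 : Matrix (Fin n) (Fin n) ℂ) =
      diagonal fun j => ((1 - Pi.single i 1 : Fin n → ℝ) j : ℂ) := by
    rw [← diagonal_one, ← diagonal_single, diagonal_sub]
    congr 1
    ext j
    by_cases hji : j = i <;> simp [hji]
  have hv_star : star v = v := by
    ext j
    by_cases hji : j = i <;> simp [v, hji]
  have hv_support : (Finset.univ.filter fun j => v j ≠ 0) = Finset.univ.erase i := by
    ext j
    by_cases hji : j = i <;> simp [v, Pi.single_apply, hji]
  refine KIncoherent.add (.smul ?_ hc) (.smul ?_ hd)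
  · rw [hdiag]
    exact kIncoherent_diagonal (by omega) fun j => by by_cases hji : j = i <;> simp [hji]
  · have h := kIncoherent_vecMulVec_self_star (k := n - 1) (ψ := v) (by simp [hv_support])
    rwa [hv_star] at h

section Coefficients

variable {x γ : ℝ}

theorem div_sub_two_le_inv_sub_one (hx : 2 ≤ x) (hγ : γ ≤ (x - 2) / (x - 1)) :
    γ / (x - 2) ≤ (x - 1)⁻¹ := by
  rcases hx.eq_or_lt with rfl | hx
  · norm_num
  · rw [div_le_iff₀ (by linarith), inv_mul_eq_div]
    exact hγ

theorem div_sub_two_mul_sub_two (hx : 2 ≤ x) (hγ0 : 0 ≤ γ) (hγ : γ ≤ (x - 2) / (x - 1)) :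
    γ / (x - 2) * (x - 2) = γ := by
  rcases hx.eq_or_lt with rfl | hx
  -- at `x = 2` the left side is `γ / 0 = 0`, so the hypothesis must force `γ = 0`
  · norm_num at hγ ⊢
    linarith
  · exact div_mul_cancel₀ γ (by linarith)

end Coefficients

theorem stmt10_general {n : ℕ} (hn : 2 ≤ n) (γ : ℝ) (hγ0 : 0 ≤ γ)
    (hγ : γ ≤ ((n : ℝ) - 2) / ((n : ℝ) - 1))
    (G : Matrix (Fin n) (Fin n) ℂ)
    (hG : G = 1 + (γ : ℂ) • (Matrix.of (fun _ _ => (1 : ℂ)) - 1))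
    (F : Fin n → Matrix (Fin n) (Fin n) ℂ)
    (hF : ∀ i, F i =
      ((((n : ℂ) - 1)⁻¹ - (γ : ℂ) / ((n : ℂ) - 2)) •
        (1 - Matrix.single i i 1)) +
      ((γ : ℂ) / ((n : ℂ) - 2)) •
        Matrix.vecMulVec ((fun _ => (1 : ℂ)) - Pi.single i 1)
          ((fun _ => (1 : ℂ)) - Pi.single i 1)) :
    G = ∑ i, F i ∧ (∀ i, (F i).PosSemidef) ∧
    (∀ i j, F i i j = 0 ∧ F i j i = 0) ∧
    KIncoherent (n - 1) G := by
  have hn' : (2 : ℝ) ≤ n := by exact_mod_cast hn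
  set d : ℝ := γ / ((n : ℝ) - 2)
  set c : ℝ := ((n : ℝ) - 1)⁻¹ - d
  have hFcd : F = incoherentTerm c d := by
    funext i
    rw [hF]
    simp [incoherentTerm, c, d]
  have hdγ : d * ((n : ℝ) - 2) = γ := div_sub_two_mul_sub_two hn' hγ0 hγ
  have hcdγ : c * ((n : ℝ) - 1) + d = 1 - γ := by
    have : ((n : ℝ) - 1)⁻¹ * ((n : ℝ) - 1) = 1 := inv_mul_cancel₀ (by linarith)
    linear_combination this - hdγ
  have hGF : G = ∑ i, F i := by
    rw [hG, hFcd, sum_incoherentTerm, Fintype.card_fin, hcdγ, hdγ]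
    push_cast
    module
  have hF_inc (i : Fin n) : KIncoherent (n - 1) (F i) :=
    hFcd ▸ kIncoherent_incoherentTerm hn (sub_nonneg.2 (div_sub_two_le_inv_sub_one hn' hγ))
      (div_nonneg hγ0 (by linarith)) i
  refine ⟨hGF, fun i => (hF_inc i).posSemidef, fun i j => ?_, hGF ▸ .sum fun i _ => hF_inc i⟩
  rw [hFcd]
  exact ⟨incoherentTerm_apply_self_left c d i j, incoherentTerm_apply_self_right c d i j⟩

theorem stmt10 {n : ℕ} (hn : 2 ≤ n) (γ : ℝ) (hγ0 : 0 ≤ γ) (hγ1 : γ ≤ 1)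
    (hγ : γ ≤ ((n : ℝ) - 2) / ((n : ℝ) - 1))
    (G : Matrix (Fin n) (Fin n) ℂ)
    (hG : G = 1 + (γ : ℂ) • (Matrix.of (fun _ _ => (1 : ℂ)) - 1))
    (F : Fin n → Matrix (Fin n) (Fin n) ℂ)
    (hF : ∀ i, F i =
      ((((n : ℂ) - 1)⁻¹ - (γ : ℂ) / ((n : ℂ) - 2)) •
        (1 - Matrix.single i i 1)) +
      ((γ : ℂ) / ((n : ℂ) - 2)) •
        Matrix.vecMulVec ((fun _ => (1 : ℂ)) - Pi.single i 1)
          ((fun _ => (1 : ℂ)) - Pi.single i 1)) :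
    G = ∑ i, F i ∧ (∀ i, (F i).PosSemidef) ∧
    (∀ i j, F i i j = 0 ∧ F i j i = 0) ∧
    KIncoherent (n - 1) G :=
  stmt10_general hn γ hγ0 hγ G hG F hF
end

section
/- Let n ≥ 2, γ > (n−2)/(n−1), and G = I + γ(J − I) where J is the n×n all-ones matrix. Then G is not (n−1)-incoherent: the matrix X = (n−2)I − (J − I) has all (n−1)×(n−1) principal submatrices PSD (each is diagonally dominant), and Tr(XG) = n(n−2) − n(n−1)γ < 0. -/
open Matrix BigOperators Finset ComplexOrder

/-! Weak duality: if `G = ∑ⱼ cⱼ ψⱼ ψⱼ*` with `cⱼ ≥ 0` and every `ψⱼ` having at most `n - 1`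
nonzero entries, hence vanishing at some coordinate `i`, then `Tr (X G) = ∑ⱼ cⱼ ψⱼ* X ψⱼ`, and
each `ψⱼ* X ψⱼ` is a quadratic form of the principal submatrix of `X` obtained by deleting row
and column `i`; so `Tr (X G) ≥ 0` whenever `X` is locally PSD. For `X = (n - 1) I - J` each
such submatrix is `(n - 1) I - J`, which is PSD by Cauchy–Schwarz `|∑ xₖ|² ≤ (n - 1) ∑ |xₖ|²`,
while `Tr (X G) = n (n - 2) - n (n - 1) γ < 0`. -/

namespace Matrix

variable {ι : Type*} [Fintype ι]

lemma star_dotProduct_self_eq_sum_norm_sq (x : ι → ℂ) :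
    star x ⬝ᵥ x = ((∑ i, ‖x i‖ ^ 2 : ℝ) : ℂ) := by
  simp only [dotProduct, Pi.star_apply, Complex.star_def, Complex.conj_mul', Complex.ofReal_sum,
    Complex.ofReal_pow]

lemma star_dotProduct_allOnes_mulVec (x : ι → ℂ) :
    star x ⬝ᵥ (of fun _ _ => 1 : Matrix ι ι ℂ) *ᵥ x = ((‖∑ i, x i‖ ^ 2 : ℝ) : ℂ) := by
  have hJ : (of fun _ _ => 1 : Matrix ι ι ℂ) *ᵥ x = fun _ => ∑ i, x i := by
    ext; simp [mulVec, dotProduct]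
  rw [hJ, Complex.ofReal_pow, ← Complex.conj_mul', map_sum]
  simp [dotProduct, Finset.sum_mul]

lemma posSemidef_smul_one_sub_allOnes [DecidableEq ι] {c : ℝ} (hc : (Fintype.card ι : ℝ) ≤ c) :
    ((c : ℂ) • 1 - of fun _ _ => 1 : Matrix ι ι ℂ).PosSemidef := by
  refine .of_dotProduct_mulVec_nonneg ?_ fun x => ?_
  · ext i j
    by_cases h : i = j <;> simp [h, Ne.symm]
  have cauchySchwarz : ‖∑ i, x i‖ ^ 2 ≤ c * ∑ i, ‖x i‖ ^ 2 :=
    calc ‖∑ i, x i‖ ^ 2 ≤ (∑ i, ‖x i‖) ^ 2 := by gcongr; exact norm_sum_le _ _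
      _ ≤ Fintype.card ι * ∑ i, ‖x i‖ ^ 2 := sq_sum_le_card_mul_sum_sq
      _ ≤ c * ∑ i, ‖x i‖ ^ 2 := by gcongr
  rw [sub_mulVec, dotProduct_sub, smul_mulVec, one_mulVec, dotProduct_smul,
    star_dotProduct_self_eq_sum_norm_sq, star_dotProduct_allOnes_mulVec, smul_eq_mul,
    ← Complex.ofReal_mul, ← Complex.ofReal_sub, Complex.zero_le_real]
  linarith

lemma star_dotProduct_mulVec_submatrix_of_eq_zero {R : Type*} [NonUnitalNonAssocSemiring R]
    [StarAddMonoid R] (p : ι → Prop) [DecidablePred p] (A : Matrix ι ι R) (v : ι → R)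
    (hv : ∀ i, ¬ p i → v i = 0) :
    star v ⬝ᵥ A *ᵥ v =
      star (fun k : Subtype p => v k) ⬝ᵥ
        A.submatrix ((↑) : Subtype p → ι) ((↑) : Subtype p → ι) *ᵥ fun k => v k := by
  have restrict : ∀ f : ι → R, (∀ i, ¬ p i → f i = 0) → ∑ i, f i = ∑ k : Subtype p, f k :=
    fun f hf => by
      rw [← Finset.subtype_univ, Finset.sum_subtype_eq_sum_filter,
        Finset.sum_filter_of_ne fun i _ hi => not_not.mp (mt (hf i) hi)]
  simp only [dotProduct, mulVec, Pi.star_apply, submatrix_apply]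
  rw [restrict _ fun i hi => by simp [hv i hi]]
  exact Finset.sum_congr rfl fun k _ => by rw [restrict _ fun i hi => by simp [hv i hi]]

lemma allOnes_mul_allOnes : (of fun _ _ => 1 : Matrix ι ι ℂ) * (of fun _ _ => 1) =
    (Fintype.card ι : ℂ) • of fun _ _ => 1 := by
  ext; simp [mul_apply]

lemma trace_allOnes : (of fun _ _ => 1 : Matrix ι ι ℂ).trace = Fintype.card ι := by
  simp [trace]

lemma trace_smul_one_sub_offDiag_mul [DecidableEq ι] (a γ : ℂ) :
    ((a • 1 - ((of fun _ _ => 1) - 1)) * (1 + γ • ((of fun _ _ => 1) - 1)) :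
        Matrix ι ι ℂ).trace =
      Fintype.card ι * a - Fintype.card ι * (Fintype.card ι - 1) * γ := by
  simp only [mul_add, mul_sub, sub_mul, smul_sub, smul_mul_assoc, mul_smul_comm, one_mul, mul_one,
    allOnes_mul_allOnes, trace_add, trace_sub, trace_smul, trace_one, trace_allOnes, smul_eq_mul]
  ring

end Matrix

open Matrix

lemma LocallyPSD.star_dotProduct_mulVec_nonneg {n : ℕ} {X : Matrix (Fin n) (Fin n) ℂ}
    (hX : LocallyPSD X) {v : Fin n → ℂ} (hv : #{i | v i ≠ 0} ≤ n - 1) :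
    0 ≤ star v ⬝ᵥ X *ᵥ v := by
  rcases n.eq_zero_or_pos with rfl | hn
  · simp [dotProduct]
  obtain ⟨i, hi⟩ : ∃ i, v i = 0 := by
    by_contra! h
    have : #{i | v i ≠ 0} = n := by simp [h]
    omega
  rw [star_dotProduct_mulVec_submatrix_of_eq_zero (· ≠ i) X v fun j hj => by rwa [not_not.mp hj]]
  exact (hX i).dotProduct_mulVec_nonneg _

lemma LocallyPSD.trace_mul_nonneg {n : ℕ} {X G : Matrix (Fin n) (Fin n) ℂ}
    (hX : LocallyPSD X) (hG : KIncoherent (n - 1) G) : 0 ≤ (X * G).trace := by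
  obtain ⟨m, c, ψ, hc, hψ, rfl⟩ := hG
  rw [Matrix.mul_sum, trace_sum]
  refine Finset.sum_nonneg fun j _ => ?_
  rw [Matrix.mul_smul, trace_smul, mul_vecMulVec, trace_vecMulVec, dotProduct_comm, smul_eq_mul]
  exact mul_nonneg (Complex.zero_le_real.mpr (hc j)) (hX.star_dotProduct_mulVec_nonneg (hψ j))

lemma locallyPSD_smul_one_sub_offDiag (n : ℕ) :
    LocallyPSD (((n : ℂ) - 2) • 1 - ((of fun _ _ => 1) - 1) : Matrix (Fin n) (Fin n) ℂ) := by
  intro i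
  have hn : 1 ≤ n := i.pos
  have hcard : (Fintype.card {j // j ≠ i} : ℝ) ≤ n - 1 := by
    simp [Fintype.card_subtype_compl, Nat.cast_sub hn]
  convert posSemidef_smul_one_sub_allOnes hcard using 1
  ext k l
  rcases eq_or_ne k l with rfl | h
  · simp; ring
  · simp [h, one_apply, Subtype.val_inj]

theorem stmt11 {n : ℕ} (hn : 2 ≤ n) (γ : ℝ)
    (hγ : ((n : ℝ) - 2) / ((n : ℝ) - 1) < γ)
    (G : Matrix (Fin n) (Fin n) ℂ)
    (hG : G = 1 + (γ : ℂ) • (Matrix.of (fun _ _ => (1 : ℂ)) - 1))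
    (X : Matrix (Fin n) (Fin n) ℂ)
    (hX : X = ((n : ℂ) - 2) • 1 - (Matrix.of (fun _ _ => (1 : ℂ)) - 1)) :
    LocallyPSD X ∧
    (X * G).trace = (n : ℂ) * ((n : ℂ) - 2) - (n : ℂ) * ((n : ℂ) - 1) * (γ : ℂ) ∧
    ¬ KIncoherent (n - 1) G := by
  subst hX hG
  have hTrace := trace_smul_one_sub_offDiag_mul (ι := Fin n) ((n : ℂ) - 2) γ
  rw [Fintype.card_fin] at hTrace
  have hLocal := locallyPSD_smul_one_sub_offDiag n
  refine ⟨hLocal, hTrace, fun hIncoherent => ?_⟩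
  have hNonneg : (0 : ℝ) ≤ n * (n - 2) - n * (n - 1) * γ := by
    have := hLocal.trace_mul_nonneg hIncoherent
    rw [hTrace] at this
    exact_mod_cast this
  have hn' : (2 : ℝ) ≤ n := by exact_mod_cast hn
  have hγ' : (n : ℝ) - 2 < γ * (n - 1) := (div_lt_iff₀ (by linarith)).mp hγ
  nlinarith [mul_lt_mul_of_pos_left hγ' (by linarith : (0 : ℝ) < n)]
end

section
/- Let n ≥ 2 and let G be an n×n positive semidefinite matrix with unit diagonal such that |G_{i,j}| > (n−2)/(n−1) for all i ≠ j. Then G is not (n−1)-incoherent. -/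
/-!
If `ψ` has at most `k` nonzero coordinates, Cauchy–Schwarz on its support gives
`(∑ |ψ i|)² ≤ k ∑ |ψ i|²`. Summing over the rank-one terms of a decomposition, a `k`-incoherent
matrix `X` satisfies `∑ i j, |X i j| ≤ k · Re (tr X)`. For `G` with unit diagonal and `k = n - 1`
this bounds the entrywise `ℓ¹` norm by `n (n - 1)`, whereas the off-diagonal hypothesis makes it
exceed `n + n (n - 1) · (n - 2) / (n - 1) = n (n - 1)`.
-/

open Matrix BigOperators Finset ComplexOrder

theorem sq_sum_norm_le_card_support_mul {ι E : Type*} [Fintype ι] [NormedAddCommGroup E]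
    [DecidableEq E] (v : ι → E) : (∑ i, ‖v i‖) ^ 2 ≤ #{i | v i ≠ 0} * ∑ i, ‖v i‖ ^ 2 := by
  have sum_support (f : ℝ → ℝ) (hf : f 0 = 0) : ∑ i with v i ≠ 0, f ‖v i‖ = ∑ i, f ‖v i‖ :=
    sum_subset (subset_univ _) fun i _ hi => by simp_all
  rw [← sum_support (fun x => x) rfl, ← sum_support (· ^ 2) (zero_pow two_ne_zero)]
  exact sq_sum_le_card_mul_sum_sq

section RankOne
variable {ι : Type*} [Fintype ι] (v : ι → ℂ)

theorem sum_sum_norm_vecMulVec_star_self :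
    ∑ i, ∑ j, ‖vecMulVec v (star v) i j‖ = (∑ i, ‖v i‖) ^ 2 := by
  simp [vecMulVec_apply, sq, sum_mul_sum]

theorem re_trace_vecMulVec_star_self : (vecMulVec v (star v)).trace.re = ∑ i, ‖v i‖ ^ 2 := by
  simp only [trace_vecMulVec, dotProduct, Pi.star_apply, RCLike.star_def, Complex.mul_conj,
    Complex.re_sum, Complex.ofReal_re, Complex.normSq_eq_norm_sq]

end RankOne

theorem KIncoherent.sum_sum_norm_le {n k : ℕ} {X : Matrix (Fin n) (Fin n) ℂ}
    (hX : KIncoherent k X) : ∑ i, ∑ j, ‖X i j‖ ≤ k * X.trace.re := by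
  obtain ⟨m, c, ψ, hc, hsupp, rfl⟩ := hX
  calc ∑ i, ∑ j, ‖(∑ t, (c t : ℂ) • vecMulVec (ψ t) (star (ψ t))) i j‖
      ≤ ∑ i, ∑ j, ∑ t, c t * ‖vecMulVec (ψ t) (star (ψ t)) i j‖ := by
        gcongr with i _ j _
        simp only [Matrix.sum_apply, Matrix.smul_apply]
        refine (norm_sum_le _ _).trans_eq (sum_congr rfl fun t _ => ?_)
        rw [norm_smul, Complex.norm_real, Real.norm_of_nonneg (hc t)]
    _ = ∑ t, c t * (∑ i, ‖ψ t i‖) ^ 2 := by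
        rw [(sum_congr rfl fun _ _ => sum_comm).trans sum_comm]
        simp only [← mul_sum, sum_sum_norm_vecMulVec_star_self]
    _ ≤ ∑ t, c t * (k * ∑ i, ‖ψ t i‖ ^ 2) := by
        gcongr with t _
        · exact hc t
        · exact (sq_sum_norm_le_card_support_mul (ψ t)).trans (by gcongr; exact_mod_cast hsupp t)
    _ = k * ∑ t, c t * ∑ i, ‖ψ t i‖ ^ 2 := by
        rw [mul_sum]; exact sum_congr rfl fun _ _ => mul_left_comm _ _ _
    _ = k * (∑ t, (c t : ℂ) • vecMulVec (ψ t) (star (ψ t))).trace.re := by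
        simp only [trace_sum, trace_smul, smul_eq_mul, Complex.re_sum, Complex.re_ofReal_mul,
          re_trace_vecMulVec_star_self]

theorem card_mul_lt_sum_sum_norm {ι E : Type*} [Fintype ι] [DecidableEq ι] [Nontrivial ι]
    [Norm E] {G : Matrix ι ι E} {a : ℝ} (hdiag : ∀ i, ‖G i i‖ = 1)
    (h : ∀ i j, i ≠ j → a < ‖G i j‖) :
    Fintype.card ι * (1 + (Fintype.card ι - 1) * a) < ∑ i, ∑ j, ‖G i j‖ := by
  have row_lt (i : ι) : 1 + (Fintype.card ι - 1) * a < ∑ j, ‖G i j‖ := by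
    rw [← add_sum_erase _ _ (mem_univ i), hdiag i]
    have hcard : ((univ.erase i).card : ℝ) = Fintype.card ι - 1 := by
      rw [card_erase_of_mem (mem_univ i), card_univ, Nat.cast_pred Fintype.card_pos]
    calc 1 + (Fintype.card ι - 1) * a = 1 + ∑ _ ∈ univ.erase i, a := by
          rw [sum_const, nsmul_eq_mul, hcard]
      _ < 1 + ∑ j ∈ univ.erase i, ‖G i j‖ := by
          obtain ⟨j, hj⟩ := exists_ne i
          gcongr with k hk
          · exact ⟨j, mem_erase.2 ⟨hj, mem_univ j⟩⟩
          · exact h i k (ne_of_mem_erase hk).symm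
  calc Fintype.card ι * (1 + (Fintype.card ι - 1) * a)
      = ∑ _ : ι, (1 + (Fintype.card ι - 1) * a) := by rw [sum_const, card_univ, nsmul_eq_mul]
    _ < ∑ i, ∑ j, ‖G i j‖ := sum_lt_sum_of_nonempty univ_nonempty fun i _ => row_lt i

theorem stmt13_general {n : ℕ} (hn : 2 ≤ n) (G : Matrix (Fin n) (Fin n) ℂ)
    (hdiag : ∀ i, G i i = 1)
    (h : ∀ i j, i ≠ j → ((n : ℝ) - 2) / ((n : ℝ) - 1) < ‖G i j‖) :
    ¬ KIncoherent (n - 1) G := by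
  intro hG
  have : Nontrivial (Fin n) := Fin.nontrivial_iff_two_le.mpr hn
  have lower := card_mul_lt_sum_sum_norm (fun i => by rw [hdiag, norm_one]) h
  have upper := hG.sum_sum_norm_le
  have trace_eq : G.trace.re = n := by simp [trace, hdiag]
  have bounds_meet : (n : ℝ) * (1 + (n - 1) * ((n - 2) / (n - 1))) = ((n - 1 : ℕ) : ℝ) * n := by
    have : (n : ℝ) - 1 ≠ 0 := by
      have : (2 : ℝ) ≤ n := by exact_mod_cast hn
      linarith
    rw [Nat.cast_sub (by omega)]
    field_simp
    ring
  rw [Fintype.card_fin] at lower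
  rw [trace_eq] at upper
  linarith

theorem stmt13 {n : ℕ} (hn : 2 ≤ n) (G : Matrix (Fin n) (Fin n) ℂ)
    (hG : G.PosSemidef) (hdiag : ∀ i, G i i = 1)
    (h : ∀ i j, i ≠ j → ((n : ℝ) - 2) / ((n : ℝ) - 1) < ‖G i j‖) :
    ¬ KIncoherent (n - 1) G :=
  stmt13_general hn G hdiag h
end

section
/- Let x_0, x_1, ..., x_{n−1} be non-negative reals with Σ_j x_j² = 1 and Σ_j x_j⁴ ≤ 1/2. Then x_0 ≤ Σ_{j=1}^{n−1} x_j. -/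
open Matrix BigOperators Finset ComplexOrder

theorem stmt16 {n : ℕ} (hn : 0 < n) (x : Fin n → ℝ) (hx : ∀ j, 0 ≤ x j)
    (h1 : ∑ j, x j ^ 2 = 1) (h2 : ∑ j, x j ^ 4 ≤ 1 / 2) :
    x ⟨0, hn⟩ ≤ ∑ j ∈ Finset.univ.erase (⟨0, hn⟩ : Fin n), x j := by
  have hzmem : (⟨0, hn⟩ : Fin n) ∈ (Finset.univ : Finset (Fin n)) := Finset.mem_univ _
  -- abbreviations as opaque constants
  obtain ⟨z, hz⟩ : ∃ z : Fin n, z = ⟨0, hn⟩ := ⟨_, rfl⟩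
  rw [← hz] at hzmem ⊢
  obtain ⟨E, hE⟩ : ∃ E : Finset (Fin n), E = Finset.univ.erase z := ⟨_, rfl⟩
  rw [← hE]
  obtain ⟨S, hSdef⟩ : ∃ S : ℝ, S = ∑ j ∈ E, x j := ⟨_, rfl⟩
  rw [← hSdef]
  obtain ⟨Q, hQdef⟩ : ∃ Q : ℝ, Q = ∑ j ∈ E, x j ^ 2 := ⟨_, rfl⟩
  obtain ⟨R, hRdef⟩ : ∃ R : ℝ, R = ∑ j ∈ E, x j ^ 4 := ⟨_, rfl⟩
  have hsplit : ∀ f : Fin n → ℝ, f z + ∑ j ∈ E, f j = ∑ j, f j := by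
    intro f; rw [hE]; exact Finset.add_sum_erase _ f hzmem
  have h1' : x z ^ 2 + Q = 1 := by
    rw [hQdef, ← h1]; exact hsplit (fun j => x j ^ 2)
  have h2' : x z ^ 4 + R ≤ 1 / 2 := by
    rw [hRdef]
    calc x z ^ 4 + ∑ j ∈ E, x j ^ 4 = ∑ j, x j ^ 4 := hsplit (fun j => x j ^ 4)
      _ ≤ 1 / 2 := h2
  obtain ⟨A, hAdef⟩ : ∃ A : ℝ, A = ∑ i ∈ E, ∑ j ∈ E.erase i, x i * x j := ⟨_, rfl⟩
  obtain ⟨B, hBdef⟩ : ∃ B : ℝ, B = ∑ i ∈ E, ∑ j ∈ E.erase i, (x i ^ 2) * (x j ^ 2) := ⟨_, rfl⟩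
  have expand : ∀ (f : Fin n → ℝ),
      (∑ i ∈ E, f i) * (∑ j ∈ E, f j)
        = (∑ i ∈ E, f i * f i) + ∑ i ∈ E, ∑ j ∈ E.erase i, f i * f j := by
    intro f
    rw [Finset.sum_mul, ← Finset.sum_add_distrib]
    apply Finset.sum_congr rfl
    intro i hi
    rw [Finset.mul_sum, ← Finset.add_sum_erase E (fun j => f i * f j) hi]
  have hSQ : S * S = Q + A := by
    rw [hSdef, hQdef, hAdef, expand x]
    congr 1
    exact Finset.sum_congr rfl (fun i _ => by ring)
  have hQR : Q * Q = R + B := by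
    rw [hQdef, hRdef, hBdef, expand (fun j => x j ^ 2)]
    congr 1
    exact Finset.sum_congr rfl (fun i _ => by ring)
  have hA0 : 0 ≤ A := by
    rw [hAdef]
    apply Finset.sum_nonneg; intro i _
    apply Finset.sum_nonneg; intro j _
    exact mul_nonneg (hx i) (hx j)
  have hterm : ∀ i ∈ E, ∀ j ∈ E.erase i, 2 * (x i * x j) ≤ A := by
    intro i hi j hj
    have hjE : j ∈ E := Finset.mem_of_mem_erase hj
    have hne : j ≠ i := Finset.ne_of_mem_erase hj
    have hiE : i ∈ E.erase j := Finset.mem_erase.2 ⟨fun h => hne h.symm, hi⟩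
    have g1 : x i * x j ≤ ∑ j' ∈ E.erase i, x i * x j' :=
      Finset.single_le_sum (fun k _ => mul_nonneg (hx i) (hx k)) hj
    have g2 : x j * x i ≤ ∑ j' ∈ E.erase j, x j * x j' :=
      Finset.single_le_sum (fun k _ => mul_nonneg (hx j) (hx k)) hiE
    have g3 : (∑ j' ∈ E.erase i, x i * x j') + (∑ j' ∈ E.erase j, x j * x j') ≤ A := by
      have hsub : ({i, j} : Finset (Fin n)) ⊆ E := by
        intro k hk
        rcases Finset.mem_insert.1 hk with h | h
        · exact h ▸ hi
        · exact (Finset.mem_singleton.1 h) ▸ hjE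
      have hmono := Finset.sum_le_sum_of_subset_of_nonneg hsub
        (fun k _ _ => Finset.sum_nonneg (fun l _ => mul_nonneg (hx k) (hx l)))
        (f := fun k => ∑ j' ∈ E.erase k, x k * x j')
      rw [Finset.sum_pair (fun h : i = j => hne h.symm)] at hmono
      rw [hAdef]
      exact hmono
    nlinarith [g1, g2, g3, mul_comm (x j) (x i)]
  have pull : ∀ (c : ℝ), ∑ i ∈ E, ∑ j ∈ E.erase i, (x i * x j) * c
      = (∑ i ∈ E, ∑ j ∈ E.erase i, x i * x j) * c := by
    intro c
    rw [Finset.sum_mul]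
    exact Finset.sum_congr rfl fun i _ => (Finset.sum_mul _ _ _).symm
  have key : 2 * B ≤ A * A := by
    have hB : B ≤ ∑ i ∈ E, ∑ j ∈ E.erase i, (x i * x j) * (A / 2) := by
      rw [hBdef]
      apply Finset.sum_le_sum
      intro i hi
      apply Finset.sum_le_sum
      intro j hj
      have h2t : 2 * (x i * x j) ≤ A := hterm i hi j hj
      have hxx : 0 ≤ x i * x j := mul_nonneg (hx i) (hx j)
      nlinarith
    have hsum : ∑ i ∈ E, ∑ j ∈ E.erase i, (x i * x j) * (A / 2) = A * (A / 2) := by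
      rw [pull (A / 2), ← hAdef]
    rw [hsum] at hB
    nlinarith [hB]
  have hS0 : 0 ≤ S := by
    rw [hSdef]; exact Finset.sum_nonneg (fun j _ => hx j)
  have hQS : Q ≤ S * S := by linarith
  have hAe : A = S * S - Q := by linarith
  have hBe : B = Q * Q - R := by linarith
  rw [hAe, hBe] at key
  have ha0 : 0 ≤ x z := hx z
  clear hsplit hterm pull hSQ hQR hA0 hAe hBe hAdef hBdef hSdef hQdef hRdef hE hz h1 h2 hzmem
  by_contra hcon
  push_neg at hcon
  have e2 : S^4 - 2*S^2*Q - Q^2 + 2*R ≥ 0 := by nlinarith [key]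
  have haS : S^2 < (x z)^2 := by nlinarith [hcon, hS0]
  have e1 : (x z)^4 - 2*(x z)^2*Q - Q^2 + 2*R ≤ 0 := by nlinarith [h1', h2']
  have hp1 : (0:ℝ) < (x z)^2 - S^2 := by linarith
  have hp2 : (0:ℝ) < (x z)^2 + S^2 - 2*Q := by nlinarith [haS, hQS]
  nlinarith [e1, e2, mul_pos hp1 hp2]
end
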